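/- arXiv:2502.16113 — 3 statements merged into one kernel-verified Lean document; each statement's English description precedes it below -/
import Mathlib

section
/- In any B_{q,t}-module datum, for every i ≥ 1 and all m₁, …, m_i ∈ ℤ the following identity of operators V₁ → V₀ holds: A_{m₁,…,m_{i−1},m_i,0} − qt·A_{m₁,…,m_{i−1},m_i−1,1} = −A_{m₁,…,m_i} ∘ (d₊ d₋), where d₊d₋ : V₁ → V₁ is the composite of d₋ : V₁ → V₀ followed by d₊ : V₀ → V₁, and both A's on the left have i+1 indices (only the last two entries differ). -/
/- Common setup: the field K = ℚ(q,t) and the notion of a B_{q,t}-module datum,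
i.e. a family of K-vector spaces V_k (k ≥ 0) together with maps d₊ : V_k → V_{k+1},
d₋ : V_k → V_{k−1}, invertible operators z_i (1 ≤ i ≤ k) and operators T_i
(1 ≤ i ≤ k−1) on V_k (the T_i are invertible as a consequence of the quadratic
Hecke relation, so we record them as units), subject to the defining relations
of the double Dyck path algebra 𝔹_{q,t}.  Operators compose right-to-left;
`Module.End` multiplication is composition. -/

noncomputable section

/-- The field ℚ(q,t). -/
abbrev Kq : Type := FractionRing (MvPolynomial (Fin 2) ℚ)

/-- The variable q ∈ ℚ(q,t). -/
def qv : Kq := algebraMap (MvPolynomial (Fin 2) ℚ) Kq (MvPolynomial.X 0)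

/-- The variable t ∈ ℚ(q,t). -/
def tv : Kq := algebraMap (MvPolynomial (Fin 2) ℚ) Kq (MvPolynomial.X 1)

/-- φ := (q−1)^{−1}(d₊d₋ − d₋d₊), an operator on V_{k+1}. -/
def phiE {V : ℕ → Type*} [∀ k, AddCommGroup (V k)] [∀ k, Module Kq (V k)]
    (dp : ∀ k, V k →ₗ[Kq] V (k + 1)) (dm : ∀ k, V (k + 1) →ₗ[Kq] V k) (k : ℕ) :
    Module.End Kq (V (k + 1)) :=
  (qv - 1)⁻¹ • (dp k ∘ₗ dm k - dm (k + 1) ∘ₗ dp (k + 1))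

/-- A B_{q,t}-module datum on the family of K-vector spaces `V`.
`z k i` is the operator z_i on V_k (meaningful for 1 ≤ i ≤ k) and `T k i` is
the operator T_i on V_k (meaningful for 1 ≤ i ≤ k−1); all relations are imposed
on every V_k on which all their factors are defined. -/
structure BqtDatum (V : ℕ → Type*) [∀ k, AddCommGroup (V k)] [∀ k, Module Kq (V k)] where
  /-- d₊ : V_k → V_{k+1} -/
  dp : ∀ k, V k →ₗ[Kq] V (k + 1)
  /-- d₋ : V_{k+1} → V_k -/
  dm : ∀ k, V (k + 1) →ₗ[Kq] V k
  /-- the pairwise commuting invertible operators z_1, …, z_k on V_k -/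
  z : ∀ k, ℕ → (Module.End Kq (V k))ˣ
  /-- the operators T_1, …, T_{k−1} on V_k -/
  T : ∀ k, ℕ → (Module.End Kq (V k))ˣ
  z_comm : ∀ k i j, 1 ≤ i → i ≤ k → 1 ≤ j → j ≤ k → z k i * z k j = z k j * z k i
  hecke : ∀ k i, 1 ≤ i → i + 1 ≤ k →
    ((T k i : Module.End Kq (V k)) - 1) * ((T k i : Module.End Kq (V k)) + qv • 1) = 0
  braid : ∀ k i, 1 ≤ i → i + 2 ≤ k →
    T k i * T k (i + 1) * T k i = T k (i + 1) * T k i * T k (i + 1)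
  T_far : ∀ k i j, 1 ≤ i → i + 1 ≤ k → 1 ≤ j → j + 1 ≤ k → i + 1 < j →
    T k i * T k j = T k j * T k i
  TzT : ∀ k i, 1 ≤ i → i + 1 ≤ k →
    (((T k i)⁻¹ : (Module.End Kq (V k))ˣ) : Module.End Kq (V k)) *
        (z k (i + 1) : Module.End Kq (V k)) *
        (((T k i)⁻¹ : (Module.End Kq (V k))ˣ) : Module.End Kq (V k)) =
      qv⁻¹ • (z k i : Module.End Kq (V k))
  zT_far : ∀ k i j, 1 ≤ i → i ≤ k → 1 ≤ j → j + 1 ≤ k → i ≠ j → i ≠ j + 1 →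
    z k i * T k j = T k j * z k i
  dmdmT : ∀ k, (dm k ∘ₗ dm (k + 1)) ∘ₗ (T (k + 2) (k + 1) : Module.End Kq (V (k + 2))) =
    dm k ∘ₗ dm (k + 1)
  dmT : ∀ k i, 1 ≤ i → i + 1 ≤ k →
    dm k ∘ₗ (T (k + 1) i : Module.End Kq (V (k + 1))) = (T k i : Module.End Kq (V k)) ∘ₗ dm k
  Tdpdp : ∀ k, (T (k + 2) 1 : Module.End Kq (V (k + 2))) ∘ₗ (dp (k + 1) ∘ₗ dp k) =
    dp (k + 1) ∘ₗ dp k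
  dpT : ∀ k i, 1 ≤ i → i + 1 ≤ k →
    dp k ∘ₗ (T k i : Module.End Kq (V k)) = (T (k + 1) (i + 1) : Module.End Kq (V (k + 1))) ∘ₗ dp k
  phidm : ∀ k, qv • (phiE dp dm k ∘ₗ dm (k + 1)) =
    (dm (k + 1) ∘ₗ phiE dp dm (k + 1)) ∘ₗ (T (k + 2) (k + 1) : Module.End Kq (V (k + 2)))
  Tphidp : ∀ k, (T (k + 2) 1 : Module.End Kq (V (k + 2))) ∘ₗ (phiE dp dm (k + 1) ∘ₗ dp (k + 1)) =
    qv • (dp (k + 1) ∘ₗ phiE dp dm k)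
  zdm : ∀ k i, 1 ≤ i → i ≤ k →
    (z k i : Module.End Kq (V k)) ∘ₗ dm k = dm k ∘ₗ (z (k + 1) i : Module.End Kq (V (k + 1)))
  dpz : ∀ k i, 1 ≤ i → i ≤ k →
    dp k ∘ₗ (z k i : Module.End Kq (V k)) = (z (k + 1) (i + 1) : Module.End Kq (V (k + 1))) ∘ₗ dp k
  zmain : ∀ k, (z (k + 1) 1 : Module.End Kq (V (k + 1))) ∘ₗ
      (qv • (dp k ∘ₗ dm k) - dm (k + 1) ∘ₗ dp (k + 1)) =
    (qv * tv) • ((dp k ∘ₗ dm k - dm (k + 1) ∘ₗ dp (k + 1)) ∘ₗ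
      (z (k + 1) (k + 1) : Module.End Kq (V (k + 1))))

namespace BqtDatum

variable {V : ℕ → Type*} [∀ k, AddCommGroup (V k)] [∀ k, Module Kq (V k)]

/-- e_m := d₋ z₁^m d₊ : V₀ → V₀. -/
def eOp (D : BqtDatum V) (m : ℤ) : Module.End Kq (V 0) :=
  D.dm 0 ∘ₗ ((D.z 1 1 ^ m : (Module.End Kq (V 1))ˣ) : Module.End Kq (V 1)) ∘ₗ D.dp 0

end BqtDatum

namespace BqtDatum

variable {V : ℕ → Type*} [∀ k, AddCommGroup (V k)] [∀ k, Module Kq (V k)]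

/-- h_{m−1}(z₁,z₂) as an operator on V₂: Σ_{s=0}^{m−1} z₁^{m−1−s} z₂^s for m > 0,
0 for m = 0, and −(z₁z₂)^m Σ_{s=0}^{−m−1} z₁^{−m−1−s} z₂^s for m < 0; equivalently
(z₁ − z₂)·h_{m−1}(z₁,z₂) = z₁^m − z₂^m. -/
def hOp (D : BqtDatum V) (m : ℤ) : Module.End Kq (V 2) :=
  if 0 < m then
    ∑ s ∈ Finset.range m.toNat,
      ((D.z 2 1 ^ (m - 1 - (s : ℤ)) * D.z 2 2 ^ (s : ℤ) : (Module.End Kq (V 2))ˣ) :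
        Module.End Kq (V 2))
  else if m = 0 then 0
  else
    -((((D.z 2 1 * D.z 2 2) ^ m : (Module.End Kq (V 2))ˣ) : Module.End Kq (V 2)) *
      ∑ s ∈ Finset.range (-m).toNat,
        ((D.z 2 1 ^ (-m - 1 - (s : ℤ)) * D.z 2 2 ^ (s : ℤ) : (Module.End Kq (V 2))ˣ) :
          Module.End Kq (V 2)))

end BqtDatum

namespace BqtDatum

variable {V : ℕ → Type*} [∀ k, AddCommGroup (V k)] [∀ k, Module Kq (V k)]

/-- The operator z₁^{m₁} φ z₁^{m₂} φ ⋯ φ z₁^{m_n} on V₁ (empty product is 1). -/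
def Pp (D : BqtDatum V) : List ℤ → Module.End Kq (V 1)
  | [] => 1
  | [m] => ((D.z 1 1 ^ m : (Module.End Kq (V 1))ˣ) : Module.End Kq (V 1))
  | m :: ms => ((D.z 1 1 ^ m : (Module.End Kq (V 1))ˣ) : Module.End Kq (V 1)) *
      phiE D.dp D.dm 0 * Pp D ms

/-- A_{m₁,…,m_n} := d₋ z₁^{m₁} φ z₁^{m₂} φ ⋯ φ z₁^{m_n} : V₁ → V₀. -/
def Aop (D : BqtDatum V) (ms : List ℤ) : V 1 →ₗ[Kq] V 0 :=
  D.dm 0 ∘ₗ Pp D ms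

/-- Y_{m₁,…,m_n} := d₋ z₁^{m₁} φ z₁^{m₂} φ ⋯ φ z₁^{m_n} d₊ : V₀ → V₀. -/
def Yop (D : BqtDatum V) (ms : List ℤ) : Module.End Kq (V 0) :=
  Aop D ms ∘ₗ D.dp 0

end BqtDatum

namespace BqtHelpers

open BqtDatum

variable {V : ℕ → Type*} [∀ k, AddCommGroup (V k)] [∀ k, Module Kq (V k)]

lemma qv_sub_one_ne_zero : qv - 1 ≠ 0 := by
  have hinj : Function.Injective (algebraMap (MvPolynomial (Fin 2) ℚ) Kq) :=
    IsFractionRing.injective _ _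
  intro h
  have h1 : qv = 1 := by rwa [sub_eq_zero] at h
  have h2 : (MvPolynomial.X 0 : MvPolynomial (Fin 2) ℚ) = 1 := by
    apply hinj; rw [map_one]; exact h1
  have h3 := congrArg MvPolynomial.constantCoeff h2
  simp [MvPolynomial.constantCoeff_X] at h3

lemma Pp_cons_cons (D : BqtDatum V) (a b : ℤ) (l : List ℤ) :
    Pp D (a :: b :: l) =
      ((D.z 1 1 ^ a : (Module.End Kq (V 1))ˣ) : Module.End Kq (V 1)) *
        phiE D.dp D.dm 0 * Pp D (b :: l) := rfl

lemma Pp_single (D : BqtDatum V) (a : ℤ) :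
    Pp D [a] = ((D.z 1 1 ^ a : (Module.End Kq (V 1))ˣ) : Module.End Kq (V 1)) := rfl

lemma Pp_append (D : BqtDatum V) (l1 l2 : List ℤ) (h1 : l1 ≠ []) (h2 : l2 ≠ []) :
    Pp D (l1 ++ l2) = Pp D l1 * phiE D.dp D.dm 0 * Pp D l2 := by
  induction l1 with
  | nil => exact absurd rfl h1
  | cons a l1 ih =>
    cases l1 with
    | nil =>
      cases l2 with
      | nil => exact absurd rfl h2
      | cons b l2 =>
        rw [List.singleton_append, Pp_cons_cons]
        rfl
    | cons c l1' =>
      rw [List.cons_append, List.cons_append, Pp_cons_cons D a c (l1' ++ l2),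
        ← List.cons_append (a := c) (as := l1') (bs := l2), ih (by simp), Pp_cons_cons D a c l1']
      simp only [mul_assoc]

lemma zpow_split (D : BqtDatum V) (x y : ℤ) :
    ((D.z 1 1 ^ x : (Module.End Kq (V 1))ˣ) : Module.End Kq (V 1)) =
      ((D.z 1 1 ^ y : (Module.End Kq (V 1))ˣ) : Module.End Kq (V 1)) *
        ((D.z 1 1 ^ (x - y) : (Module.End Kq (V 1))ˣ) : Module.End Kq (V 1)) := by
  have h : y + (x - y) = x := by ring
  rw [← Units.val_mul, ← zpow_add, h]

lemma Pp_snoc (D : BqtDatum V) (l : List ℤ) (a b : ℤ) :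
    Pp D (l ++ [a]) = Pp D (l ++ [b]) *
      ((D.z 1 1 ^ (a - b) : (Module.End Kq (V 1))ˣ) : Module.End Kq (V 1)) := by
  cases l with
  | nil => simpa [Pp] using zpow_split D a b
  | cons c l' =>
    rw [Pp_append D (c :: l') [a] (by simp) (by simp),
      Pp_append D (c :: l') [b] (by simp) (by simp)]
    rw [Pp_single, Pp_single, zpow_split D a b, ← mul_assoc]

lemma core (D : BqtDatum V) :
    ((D.z 1 1 : (Module.End Kq (V 1))ˣ) : Module.End Kq (V 1)) * phiE D.dp D.dm 0
      - (qv * tv) • (phiE D.dp D.dm 0 *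
        ((D.z 1 1 : (Module.End Kq (V 1))ˣ) : Module.End Kq (V 1)))
      = -(((D.z 1 1 : (Module.End Kq (V 1))ˣ) : Module.End Kq (V 1)) *
          (D.dp 0 ∘ₗ D.dm 0)) := by
  have hc : qv - 1 ≠ 0 := qv_sub_one_ne_zero
  set a : Module.End Kq (V 1) := ((D.z 1 1 : (Module.End Kq (V 1))ˣ) : Module.End Kq (V 1))
    with ha
  set A : Module.End Kq (V 1) := D.dp 0 ∘ₗ D.dm 0 with hA
  set B : Module.End Kq (V 1) := D.dm 1 ∘ₗ D.dp 1 with hB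
  have hz : a * (qv • A - B) = (qv * tv) • ((A - B) * a) := D.zmain 0
  have hphi : (qv - 1) • phiE D.dp D.dm 0 = A - B := by
    show (qv - 1) • ((qv - 1)⁻¹ • (A - B)) = A - B
    rw [smul_smul, mul_inv_cancel₀ hc, one_smul]
  have key : (qv - 1) • (a * phiE D.dp D.dm 0
      - (qv * tv) • (phiE D.dp D.dm 0 * a)) = (qv - 1) • (-(a * A)) := by
    rw [smul_sub, ← mul_smul_comm, smul_comm (qv - 1) (qv * tv), ← smul_mul_assoc, hphi,
      ← hz, mul_sub, mul_sub, mul_smul_comm, smul_neg, sub_smul, one_smul]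
    abel
  have h2 := congrArg (fun X => (qv - 1)⁻¹ • X) key
  simpa [smul_smul, inv_mul_cancel₀ hc, one_smul] using h2

lemma core2 (D : BqtDatum V) :
    phiE D.dp D.dm 0
      - (qv * tv) • ((((D.z 1 1)⁻¹ : (Module.End Kq (V 1))ˣ) : Module.End Kq (V 1)) *
          phiE D.dp D.dm 0 *
          ((D.z 1 1 : (Module.End Kq (V 1))ˣ) : Module.End Kq (V 1)))
      = -(D.dp 0 ∘ₗ D.dm 0) := by
  have h := congrArg (fun X =>
    ((((D.z 1 1)⁻¹ : (Module.End Kq (V 1))ˣ) : Module.End Kq (V 1))) * X) (core D)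
  simp only [mul_sub, mul_smul_comm, mul_neg, ← mul_assoc, Units.inv_mul, one_mul] at h
  exact h

end BqtHelpers

open BqtDatum in
/-- A_{m₁,…,m_{i−1},m_i,0} − qt·A_{m₁,…,m_{i−1},m_i−1,1}
= −A_{m₁,…,m_i} ∘ (d₊d₋) as operators V₁ → V₀; here `ms` is the (possibly empty)
list of the first i−1 indices m₁,…,m_{i−1} and `m` is m_i. -/
theorem stmt15 (V : ℕ → Type*) [∀ k, AddCommGroup (V k)] [∀ k, Module Kq (V k)]
    (D : BqtDatum V) (ms : List ℤ) (m : ℤ) :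
    Aop D (ms ++ [m, 0]) - (qv * tv) • Aop D (ms ++ [m - 1, 1]) =
      -(Aop D (ms ++ [m]) ∘ₗ (D.dp 0 ∘ₗ D.dm 0)) := by
  classical
  set P : Module.End Kq (V 1) := Pp D (ms ++ [m]) with hP
  set φ : Module.End Kq (V 1) := phiE D.dp D.dm 0 with hφ
  set A : Module.End Kq (V 1) := D.dp 0 ∘ₗ D.dm 0 with hA
  have hA0 : Aop D (ms ++ [m, 0]) = D.dm 0 ∘ₗ (P * φ) := by
    have e : ms ++ [m, 0] = (ms ++ [m]) ++ [0] := by simp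
    have e2 : Pp D ((ms ++ [m]) ++ [0]) = P * φ := by
      rw [hP, hφ, BqtHelpers.Pp_append D _ _ (by simp) (by simp), BqtHelpers.Pp_single,
        zpow_zero, Units.val_one, mul_one]
    rw [Aop, e, e2]
  have hA1 : Aop D (ms ++ [m - 1, 1]) =
      D.dm 0 ∘ₗ (P * (((D.z 1 1)⁻¹ : (Module.End Kq (V 1))ˣ) : Module.End Kq (V 1)) * φ *
        ((D.z 1 1 : (Module.End Kq (V 1))ˣ) : Module.End Kq (V 1))) := by
    have e : ms ++ [m - 1, 1] = (ms ++ [m - 1]) ++ [1] := by simp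
    have e1 : m - 1 - m = (-1 : ℤ) := by ring
    have e2 : Pp D ((ms ++ [m - 1]) ++ [1]) =
        P * (((D.z 1 1)⁻¹ : (Module.End Kq (V 1))ˣ) : Module.End Kq (V 1)) * φ *
          ((D.z 1 1 : (Module.End Kq (V 1))ˣ) : Module.End Kq (V 1)) := by
      rw [hP, hφ, BqtHelpers.Pp_append D _ _ (by simp) (by simp),
        BqtHelpers.Pp_snoc D ms (m - 1) m, BqtHelpers.Pp_single, e1, zpow_neg_one, zpow_one]
    rw [Aop, e, e2]
  have hA2 : Aop D (ms ++ [m]) ∘ₗ (D.dp 0 ∘ₗ D.dm 0) = D.dm 0 ∘ₗ (P * A) := by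
    rw [Aop, LinearMap.comp_assoc, ← hP, ← hA]
    rfl
  rw [hA0, hA1, hA2]
  have key : P * φ
      - (qv * tv) • (P * (((D.z 1 1)⁻¹ : (Module.End Kq (V 1))ˣ) : Module.End Kq (V 1)) * φ *
        ((D.z 1 1 : (Module.End Kq (V 1))ˣ) : Module.End Kq (V 1)))
      = -(P * A) := by
    have h := congrArg (fun X => P * X) (BqtHelpers.core2 D)
    simp only [mul_sub, mul_smul_comm, mul_neg, ← mul_assoc] at h
    exact h
  apply LinearMap.ext; intro v
  have hk := LinearMap.congr_fun key v
  simp only [LinearMap.sub_apply, LinearMap.smul_apply, LinearMap.neg_apply,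
    LinearMap.comp_apply] at hk ⊢
  rw [← map_smul, ← map_sub, hk, map_neg]

end
end

section
/- In any B_{q,t}-module datum, for all m, k ∈ ℤ the following identity of operators V₀ → V₁ holds: z₁^{m} d₊ d₋ z₁^{k} d₊ = (q−1)·z₁^{m} φ z₁^{k} d₊ + d₋ T₁^{−1} z₁^{k} d₊ z₁^{m} d₊ − q^{−1}(1−q)·d₋ (z₁z₂)^{k} h_{m−k−1}(z₁,z₂) z₁ d₊ d₊, where (reading right-to-left) on the left d₊ : V₀ → V₁, z₁^{k} acts on V₁, d₋ : V₁ → V₀, d₊ : V₀ → V₁, z₁^{m} acts on V₁; in the second summand d₊ : V₀ → V₁, z₁^{m} acts on V₁, d₊ : V₁ → V₂, z₁^{k} and T₁^{−1} act on V₂, d₋ : V₂ → V₁; and in the third summand d₊d₊ : V₀ → V₂, the Laurent expression in z₁, z₂ acts on V₂, and d₋ : V₂ → V₁. -/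
/- Common setup: the field K = ℚ(q,t) and the notion of a B_{q,t}-module datum,
i.e. a family of K-vector spaces V_k (k ≥ 0) together with maps d₊ : V_k → V_{k+1},
d₋ : V_k → V_{k−1}, invertible operators z_i (1 ≤ i ≤ k) and operators T_i
(1 ≤ i ≤ k−1) on V_k (the T_i are invertible as a consequence of the quadratic
Hecke relation, so we record them as units), subject to the defining relations
of the double Dyck path algebra 𝔹_{q,t}.  Operators compose right-to-left;
`Module.End` multiplication is composition. -/

noncomputable section

/-! ### Auxiliary lemmas -/

lemma endUnit_inv_comp {M P : Type*} [AddCommGroup M] [Module Kq M] [AddCommGroup P]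
    [Module Kq P] (w : (Module.End Kq M)ˣ) (g : P →ₗ[Kq] M) :
    ((w⁻¹ : (Module.End Kq M)ˣ) : Module.End Kq M) ∘ₗ ((w : Module.End Kq M) ∘ₗ g) = g := by
  rw [← LinearMap.comp_assoc, ← Module.End.mul_eq_comp, ← Units.val_mul, inv_mul_cancel,
    Units.val_one, Module.End.one_eq_id, LinearMap.id_comp]

lemma endUnit_comp_inv_right {M P : Type*} [AddCommGroup M] [Module Kq M] [AddCommGroup P]
    [Module Kq P] (w : (Module.End Kq M)ˣ) (g : M →ₗ[Kq] P) :
    (g ∘ₗ (w : Module.End Kq M)) ∘ₗ ((w⁻¹ : (Module.End Kq M)ˣ) : Module.End Kq M) = g := by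
  rw [LinearMap.comp_assoc, ← Module.End.mul_eq_comp, ← Units.val_mul, mul_inv_cancel,
    Units.val_one, Module.End.one_eq_id, LinearMap.comp_id]

lemma myConjZpow {M N : Type*} [AddCommGroup M] [Module Kq M] [AddCommGroup N] [Module Kq N]
    (f : M →ₗ[Kq] N) (α : (Module.End Kq M)ˣ) (β : (Module.End Kq N)ˣ)
    (h : (β : Module.End Kq N) ∘ₗ f = f ∘ₗ (α : Module.End Kq M)) (n : ℤ) :
    ((β ^ n : (Module.End Kq N)ˣ) : Module.End Kq N) ∘ₗ f
      = f ∘ₗ ((α ^ n : (Module.End Kq M)ˣ) : Module.End Kq M) := by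
  have hinv : ((β⁻¹ : (Module.End Kq N)ˣ) : Module.End Kq N) ∘ₗ f
      = f ∘ₗ ((α⁻¹ : (Module.End Kq M)ˣ) : Module.End Kq M) := by
    calc ((β⁻¹ : (Module.End Kq N)ˣ) : Module.End Kq N) ∘ₗ f
        = ((β⁻¹ : (Module.End Kq N)ˣ) : Module.End Kq N) ∘ₗ
            ((f ∘ₗ (α : Module.End Kq M)) ∘ₗ ((α⁻¹ : (Module.End Kq M)ˣ) : Module.End Kq M)) :=
          congrArg (fun g => ((β⁻¹ : (Module.End Kq N)ˣ) : Module.End Kq N) ∘ₗ g)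
            (endUnit_comp_inv_right α f).symm
      _ = ((β⁻¹ : (Module.End Kq N)ˣ) : Module.End Kq N) ∘ₗ
            (((β : Module.End Kq N) ∘ₗ f) ∘ₗ ((α⁻¹ : (Module.End Kq M)ˣ) : Module.End Kq M)) := by
          rw [h]
      _ = (((β⁻¹ : (Module.End Kq N)ˣ) : Module.End Kq N) ∘ₗ
            ((β : Module.End Kq N) ∘ₗ f)) ∘ₗ ((α⁻¹ : (Module.End Kq M)ˣ) : Module.End Kq M) := by
          simp only [LinearMap.comp_assoc]
      _ = f ∘ₗ ((α⁻¹ : (Module.End Kq M)ˣ) : Module.End Kq M) := by rw [endUnit_inv_comp]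
  induction n using Int.induction_on with
  | zero =>
    rw [zpow_zero, zpow_zero, Units.val_one, Units.val_one, Module.End.one_eq_id,
      Module.End.one_eq_id, LinearMap.id_comp, LinearMap.comp_id]
  | succ i ih =>
    rw [zpow_add_one, zpow_add_one, Units.val_mul, Units.val_mul, Module.End.mul_eq_comp,
      Module.End.mul_eq_comp, LinearMap.comp_assoc, h, ← LinearMap.comp_assoc, ih,
      LinearMap.comp_assoc]
  | pred i ih =>
    rw [zpow_sub_one, zpow_sub_one, Units.val_mul, Units.val_mul, Module.End.mul_eq_comp,
      Module.End.mul_eq_comp, LinearMap.comp_assoc, hinv, ← LinearMap.comp_assoc, ih,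
      LinearMap.comp_assoc]

lemma qv_ne_zero : qv ≠ 0 := by
  intro h
  have hx : (MvPolynomial.X 0 : MvPolynomial (Fin 2) ℚ) ≠ 0 := MvPolynomial.X_ne_zero 0
  exact hx (IsFractionRing.injective (MvPolynomial (Fin 2) ℚ) Kq (by simpa [qv] using h))

lemma qv_sub_one_ne_zero : qv - 1 ≠ 0 := by
  intro h
  have h1 : (MvPolynomial.X 0 - 1 : MvPolynomial (Fin 2) ℚ) ≠ 0 := by
    intro hh
    have := congrArg MvPolynomial.constantCoeff hh
    simp at this
  apply h1
  apply IsFractionRing.injective (MvPolynomial (Fin 2) ℚ) Kq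
  rw [map_sub, map_one]
  simpa [qv] using h

section HeckePair
variable {R : Type*} [Ring R] [Algebra Kq R]

lemma unit_mul_inv (w : Rˣ) : (w : R) * ((w⁻¹ : Rˣ) : R) = 1 := by
  rw [← Units.val_mul, mul_inv_cancel, Units.val_one]

lemma unit_inv_mul (w : Rˣ) : ((w⁻¹ : Rˣ) : R) * (w : R) = 1 := by
  rw [← Units.val_mul, inv_mul_cancel, Units.val_one]

lemma cval {a b : Rˣ} (h : Commute a b) : (a : R) * (b : R) = (b : R) * (a : R) := by
  have := congrArg (Units.val) h
  simpa [Units.val_mul] using this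

variable (T u v : Rˣ)
variable (hquad : ((T : R) - 1) * ((T : R) + qv • 1) = 0)
variable (hTzT : ((T⁻¹ : Rˣ) : R) * (v : R) * ((T⁻¹ : Rˣ) : R) = qv⁻¹ • (u : R))
variable (hc : Commute u v)

include hquad in
lemma key1 : (T : R) * ((T : R) + (qv - 1) • 1) = qv • 1 := by
  have r1 : ((T:R) - 1) * ((T:R) + qv • 1) = (T:R)*(T:R) + qv•(T:R) - (T:R) - qv•(1:R) := by
    rw [sub_mul, mul_add, mul_add, one_mul, one_mul, mul_smul_comm, mul_one]
    abel
  have l1 : (T:R) * ((T:R) + (qv-1) • 1) = (T:R)*(T:R) + qv•(T:R) - (T:R) := by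
    rw [mul_add, mul_smul_comm, mul_one, sub_smul, one_smul]
    abel
  have e1 : (T : R) * ((T : R) + (qv-1) • 1) = ((T : R) - 1) * ((T : R) + qv • 1) + qv • 1 := by
    rw [l1, r1]
    abel
  rw [e1, hquad, zero_add]

include hquad in
lemma tinv_eq : ((T⁻¹ : Rˣ) : R) = qv⁻¹ • ((T : R) + (qv - 1) • 1) := by
  have key := key1 T hquad
  calc ((T⁻¹ : Rˣ) : R) = ((T⁻¹ : Rˣ) : R) * ((T : R) * (qv⁻¹ • ((T : R) + (qv - 1) • 1))) := by
        rw [mul_smul_comm, key, smul_smul, inv_mul_cancel₀ qv_ne_zero, one_smul, mul_one]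
    _ = qv⁻¹ • ((T : R) + (qv - 1) • 1) := by
        rw [← mul_assoc, unit_inv_mul, one_mul]

include hTzT in
lemma TuT : (T : R) * (u : R) * (T : R) = qv • (v : R) := by
  have h : (v : R) = qv⁻¹ • ((T : R) * (u : R) * (T : R)) := by
    calc (v : R)
        = ((T:R) * ((T⁻¹:Rˣ):R)) * (v:R) * (((T⁻¹:Rˣ):R) * (T:R)) := by
          rw [unit_mul_inv, unit_inv_mul, one_mul, mul_one]
      _ = (T:R) * (((T⁻¹:Rˣ):R) * (v:R) * ((T⁻¹:Rˣ):R)) * (T:R) := by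
          simp only [mul_assoc]
      _ = qv⁻¹ • ((T : R) * (u : R) * (T : R)) := by
          rw [hTzT, mul_smul_comm, smul_mul_assoc, mul_assoc]
  rw [h, smul_smul, mul_inv_cancel₀ qv_ne_zero, one_smul]

include hquad hTzT in
lemma rel_Tu : (T : R) * (u : R) = (v : R) * (T : R) + (qv - 1) • (v : R) := by
  have h1 : (T:R) * (u:R) = (qv • (v:R)) * ((T⁻¹ : Rˣ) : R) := by
    rw [← TuT T u v hTzT, mul_assoc, unit_mul_inv, mul_one]
  rw [h1, smul_mul_assoc, tinv_eq T hquad, mul_smul_comm, smul_smul,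
    mul_inv_cancel₀ qv_ne_zero, one_smul, mul_add, mul_smul_comm, mul_one]

include hquad hTzT in
lemma rel_uT : (u : R) * (T : R) = (T : R) * (v : R) + (qv - 1) • (v : R) := by
  have h1 : (u:R) * (T:R) = ((T⁻¹ : Rˣ) : R) * (qv • (v:R)) := by
    rw [← TuT T u v hTzT, ← mul_assoc, ← mul_assoc, unit_inv_mul, one_mul]
  rw [h1, mul_smul_comm, tinv_eq T hquad, smul_mul_assoc, smul_smul,
    mul_inv_cancel₀ qv_ne_zero, one_smul, add_mul, smul_mul_assoc, one_mul]

include hquad hTzT in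
lemma rel_Tv : (T : R) * (v : R) = (u : R) * (T : R) - (qv - 1) • (v : R) := by
  rw [rel_uT T u v hquad hTzT]; abel

include hquad hTzT in
lemma rel_Tvinv : (T : R) * ((v⁻¹ : Rˣ) : R)
    = ((u⁻¹ : Rˣ) : R) * (T : R) + (qv - 1) • ((u⁻¹ : Rˣ) : R) := by
  have h := congrArg (fun x => ((u⁻¹ : Rˣ) : R) * x * ((v⁻¹ : Rˣ) : R))
    (rel_uT T u v hquad hTzT)
  rw [← mul_assoc, unit_inv_mul, one_mul] at h
  have t1 : ((u⁻¹:Rˣ):R)*((T:R)*(v:R))*((v⁻¹:Rˣ):R) = ((u⁻¹:Rˣ):R)*(T:R) := by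
    rw [mul_assoc ((u⁻¹:Rˣ):R), mul_assoc (T:R), unit_mul_inv, mul_one]
  have t2 : ((u⁻¹:Rˣ):R)*((qv-1)•(v:R))*((v⁻¹:Rˣ):R) = (qv-1)•((u⁻¹:Rˣ):R) := by
    rw [mul_smul_comm, smul_mul_assoc, mul_assoc, unit_mul_inv, mul_one]
  rw [h, mul_add, add_mul, t1, t2]

include hquad hTzT hc in
lemma rel_Tcomm : Commute T (u * v) := by
  apply Units.ext
  have huvR : (u : R) * (v : R) = (v : R) * (u : R) := cval hc
  show ((T * (u*v) : Rˣ) : R) = (((u*v) * T : Rˣ) : R)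
  rw [Units.val_mul, Units.val_mul, Units.val_mul, Units.val_mul]
  calc (T:R) * ((u:R)*(v:R)) = ((T:R)*(u:R))*(v:R) := by rw [mul_assoc]
    _ = ((v:R)*(T:R) + (qv-1)•(v:R)) * (v:R) := by rw [rel_Tu T u v hquad hTzT]
    _ = (v:R)*((T:R)*(v:R)) + (qv-1)•((v:R)*(v:R)) := by
        rw [add_mul, smul_mul_assoc, mul_assoc]
    _ = (v:R)*((u:R)*(T:R) - (qv-1)•(v:R)) + (qv-1)•((v:R)*(v:R)) := by
        rw [rel_Tv T u v hquad hTzT]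
    _ = (v:R)*(u:R)*(T:R) := by rw [mul_sub, mul_smul_comm, ← mul_assoc]; abel
    _ = (u:R)*(v:R)*(T:R) := by rw [huvR]

end HeckePair

section HPow
variable {R : Type*} [Ring R] [Algebra Kq R]

def hPow (u v : Rˣ) (m : ℤ) : R :=
  if 0 < m then
    ∑ s ∈ Finset.range m.toNat,
      ((u ^ (m - 1 - (s : ℤ)) * v ^ (s : ℤ) : Rˣ) : R)
  else if m = 0 then 0
  else
    -((((u * v) ^ m : Rˣ) : R) *
      ∑ s ∈ Finset.range (-m).toNat,
        ((u ^ (-m - 1 - (s : ℤ)) * v ^ (s : ℤ) : Rˣ) : R))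

variable (u v : Rˣ)

lemma hPow_zero : hPow u v 0 = 0 := by simp [hPow]

lemma hPow_pos (m : ℤ) (h : 0 < m) : hPow u v m =
    ∑ s ∈ Finset.range m.toNat, ((u ^ (m - 1 - (s : ℤ)) * v ^ (s : ℤ) : Rˣ) : R) := by
  rw [hPow, if_pos h]

lemma hPow_neg (m : ℤ) (h : m < 0) : hPow u v m =
    -((((u * v) ^ m : Rˣ) : R) *
      ∑ s ∈ Finset.range (-m).toNat,
        ((u ^ (-m - 1 - (s : ℤ)) * v ^ (s : ℤ) : Rˣ) : R)) := by
  rw [hPow, if_neg (by omega), if_neg (by omega)]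

lemma zcongr (w : Rˣ) {a b : ℤ} (h : a = b) : w ^ a = w ^ b := by rw [h]

variable (hc : Commute u v)

include hc in
lemma nf (a b c d : ℤ) : (u^a * v^b) * (u^c * v^d) = u^(a+c) * v^(b+d) := by
  have hzz : Commute (u^c) (v^b) := (hc.zpow_left c).zpow_right b
  rw [mul_assoc, ← mul_assoc (v^b), ← hzz.eq, mul_assoc (u^c), ← mul_assoc,
    ← zpow_add, ← zpow_add]

lemma nfv (a b : ℤ) : (u^a * v^b) * v = u^a * v^(b+1) := by
  rw [mul_assoc, ← zpow_add_one]

include hc in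
lemma hPow_rec (n : ℤ) :
    hPow u v (n + 1) = ((u ^ n : Rˣ) : R) + hPow u v n * (v : R) := by
  rcases lt_trichotomy n 0 with hn | rfl | hn
  · rcases eq_or_lt_of_le (show n ≤ -1 by omega) with h1 | h1
    · -- n = -1
      subst h1
      rw [show (-1:ℤ) + 1 = 0 from rfl, hPow_zero, hPow_neg u v (-1) (by norm_num),
        show (-(-1:ℤ)).toNat = 1 from rfl, Finset.sum_range_one]
      have e1 : (u ^ (-(-1:ℤ) - 1 - ((0:ℕ):ℤ)) * v ^ ((0:ℕ):ℤ) : Rˣ) = 1 := by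
        rw [zcongr u (show -(-1:ℤ) - 1 - ((0:ℕ):ℤ) = 0 from by norm_num),
          zcongr v (show ((0:ℕ):ℤ) = 0 from by norm_num), zpow_zero, zpow_zero, mul_one]
      have e2 : ((u * v) ^ (-1:ℤ) : Rˣ) * v = u ^ (-1:ℤ) := by
        rw [hc.mul_zpow, nfv, zcongr v (show (-1:ℤ) + 1 = 0 from by norm_num),
          zpow_zero, mul_one]
      rw [e1, Units.val_one, mul_one, neg_mul, ← Units.val_mul, e2]
      simp
    · -- n ≤ -2
      obtain ⟨b, rfl⟩ : ∃ b : ℕ, n = -((b:ℤ)+2) := ⟨(-n-2).toNat, by omega⟩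
      rw [show -((b:ℤ)+2) + 1 = -((b:ℤ)+1) from by ring]
      rw [hPow_neg u v (-((b:ℤ)+1)) (by omega), hPow_neg u v (-((b:ℤ)+2)) (by omega)]
      rw [show (-(-((b:ℤ)+1))).toNat = b + 1 from by omega,
        show (-(-((b:ℤ)+2))).toNat = b + 2 from by omega]
      have hsplit : ∑ s ∈ Finset.range (b+2),
          ((u ^ (-(-((b:ℤ)+2)) - 1 - (s:ℤ)) * v ^ (s:ℤ) : Rˣ) : R)
          = (∑ s ∈ Finset.range (b+1),
            ((u ^ (-(-((b:ℤ)+2)) - 1 - (s:ℤ)) * v ^ (s:ℤ) : Rˣ) : R))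
            + ((u ^ (-(-((b:ℤ)+2)) - 1 - ((b+1:ℕ):ℤ)) * v ^ ((b+1:ℕ):ℤ) : Rˣ) : R) :=
        Finset.sum_range_succ _ (b+1)
      rw [hsplit]
      -- abbreviations
      have hg : ((((u*v) ^ (-((b:ℤ)+2)) : Rˣ) : R) *
          ((u ^ (-(-((b:ℤ)+2)) - 1 - ((b+1:ℕ):ℤ)) * v ^ ((b+1:ℕ):ℤ) : Rˣ) : R)) * (v : R)
          = ((u ^ (-((b:ℤ)+2)) : Rˣ) : R) := by
        rw [← Units.val_mul, ← Units.val_mul]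
        congr 1
        rw [hc.mul_zpow, nf u v hc, nfv,
          zcongr u (show -((b:ℤ)+2) + (-(-((b:ℤ)+2)) - 1 - ((b+1:ℕ):ℤ)) = -((b:ℤ)+2) from by push_cast; ring),
          zcongr v (show -((b:ℤ)+2) + ((b+1:ℕ):ℤ) + 1 = 0 from by push_cast; ring),
          zpow_zero, mul_one]
      have hs : ((((u*v) ^ (-((b:ℤ)+2)) : Rˣ) : R) *
          ∑ s ∈ Finset.range (b+1),
            ((u ^ (-(-((b:ℤ)+2)) - 1 - (s:ℤ)) * v ^ (s:ℤ) : Rˣ) : R)) * (v : R)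
          = (((u*v) ^ (-((b:ℤ)+1)) : Rˣ) : R) *
          ∑ s ∈ Finset.range (b+1),
            ((u ^ (-(-((b:ℤ)+1)) - 1 - (s:ℤ)) * v ^ (s:ℤ) : Rˣ) : R) := by
        rw [Finset.mul_sum, Finset.sum_mul, Finset.mul_sum]
        refine Finset.sum_congr rfl fun s _ => ?_
        rw [← Units.val_mul, ← Units.val_mul, ← Units.val_mul]
        congr 1
        rw [hc.mul_zpow, hc.mul_zpow, nf u v hc, nf u v hc, nfv,
          zcongr u (show -((b:ℤ)+2) + (-(-((b:ℤ)+2)) - 1 - (s:ℤ))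
            = -((b:ℤ)+1) + (-(-((b:ℤ)+1)) - 1 - (s:ℤ)) from by ring),
          zcongr v (show -((b:ℤ)+2) + (s:ℤ) + 1 = -((b:ℤ)+1) + (s:ℤ) from by ring)]
      rw [neg_mul, mul_add, add_mul, hs, hg]
      abel
  · -- n = 0
    rw [zero_add, hPow_zero, zero_mul, add_zero, hPow_pos u v 1 one_pos]
    rw [show (1:ℤ).toNat = 1 from rfl, Finset.sum_range_one]
    rw [zcongr u (show (1:ℤ) - 1 - ((0:ℕ):ℤ) = 0 from by norm_num),
      zcongr v (show ((0:ℕ):ℤ) = 0 from by norm_num), zpow_zero, zpow_zero, mul_one]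
  · -- n > 0
    obtain ⟨a, rfl⟩ : ∃ a : ℕ, n = (a:ℤ) := ⟨n.toNat, by omega⟩
    rw [hPow_pos u v ((a:ℤ)+1) (by omega), hPow_pos u v (a:ℤ) (by omega)]
    rw [show ((a:ℤ)+1).toNat = a + 1 from by omega, show ((a:ℤ)).toNat = a from by omega]
    rw [Finset.sum_range_succ']
    have e0 : (u ^ ((a:ℤ) + 1 - 1 - ((0:ℕ):ℤ)) * v ^ ((0:ℕ):ℤ) : Rˣ) = u ^ (a:ℤ) := by
      rw [zcongr v (show ((0:ℕ):ℤ) = 0 from by norm_num), zpow_zero, mul_one,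
        zcongr u (show (a:ℤ) + 1 - 1 - ((0:ℕ):ℤ) = (a:ℤ) from by norm_num)]
    rw [e0, Finset.sum_mul, add_comm]
    congr 1
    refine Finset.sum_congr rfl fun s _ => ?_
    rw [← Units.val_mul]
    congr 1
    rw [nfv, zcongr u (show (a:ℤ) + 1 - 1 - ((s+1:ℕ):ℤ) = (a:ℤ) - 1 - (s:ℤ) from by push_cast; ring),
      zcongr v (show ((s+1:ℕ):ℤ) = (s:ℤ) + 1 from by push_cast; ring)]

end HPow

section HeckeMain
variable {R : Type*} [Ring R] [Algebra Kq R]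
variable (T u v : Rˣ)
variable (hquad : ((T : R) - 1) * ((T : R) + qv • 1) = 0)
variable (hTzT : ((T⁻¹ : Rˣ) : R) * (v : R) * ((T⁻¹ : Rˣ) : R) = qv⁻¹ • (u : R))
variable (hc : Commute u v)

include hc in
lemma hPow_down (i : ℤ) :
    hPow u v (i - 1) = (hPow u v i - ((u ^ (i-1) : Rˣ) : R)) * ((v⁻¹ : Rˣ) : R) := by
  have hrec := hPow_rec u v hc (i - 1)
  rw [show i - 1 + 1 = i from by ring] at hrec
  rw [hrec, add_sub_cancel_left, mul_assoc, unit_mul_inv, mul_one]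

include hc in
lemma hPow_mul_sub (n : ℤ) :
    hPow u v n * ((u : R) - (v : R)) = ((u ^ n : Rˣ) : R) - ((v ^ n : Rˣ) : R) := by
  induction n using Int.induction_on with
  | zero => simp [hPow_zero]
  | succ i ih =>
    have hvu : (v:R) * ((u:R) - (v:R)) = ((u:R) - (v:R)) * (v:R) := by
      rw [mul_sub, sub_mul, cval hc.symm]
    rw [hPow_rec u v hc, add_mul, mul_assoc, hvu, ← mul_assoc, ih]
    have e1 : ((u ^ (i:ℤ) : Rˣ) : R) * (u:R) = ((u ^ ((i:ℤ)+1) : Rˣ) : R) := by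
      rw [← Units.val_mul, ← zpow_add_one]
    have e2 : ((v ^ (i:ℤ) : Rˣ) : R) * (v:R) = ((v ^ ((i:ℤ)+1) : Rˣ) : R) := by
      rw [← Units.val_mul, ← zpow_add_one]
    rw [mul_sub, e1, sub_mul, e2]
    abel
  | pred i ih =>
    have hvinv_sub : ((v⁻¹:Rˣ):R) * ((u:R) - (v:R)) = ((u:R) - (v:R)) * ((v⁻¹:Rˣ):R) := by
      rw [mul_sub, sub_mul, cval (hc.symm.inv_left), unit_inv_mul, unit_mul_inv]
    rw [show (-(i:ℤ) - 1) = (-(i:ℤ)) - 1 from rfl, hPow_down u v hc, mul_assoc, hvinv_sub,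
      ← mul_assoc, sub_mul, ih]
    have h1 : ((u ^ (-(i:ℤ)-1) : Rˣ) : R) * ((u:R) - (v:R))
        = ((u ^ (-(i:ℤ)) : Rˣ) : R) - ((u ^ (-(i:ℤ)-1) : Rˣ) : R) * (v:R) := by
      rw [mul_sub, ← Units.val_mul, ← zpow_add_one, show -(i:ℤ) - 1 + 1 = -(i:ℤ) from by ring]
    rw [h1]
    have h2 : (((u ^ (-(i:ℤ)) : Rˣ) : R) - ((v ^ (-(i:ℤ)) : Rˣ) : R) -
        (((u ^ (-(i:ℤ)) : Rˣ) : R) - ((u ^ (-(i:ℤ)-1) : Rˣ) : R) * (v:R)))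
        = ((u ^ (-(i:ℤ)-1) : Rˣ) : R) * (v:R) - ((v ^ (-(i:ℤ)) : Rˣ) : R) := by abel
    rw [h2, sub_mul, mul_assoc, unit_mul_inv, mul_one, ← Units.val_mul, ← zpow_sub_one]

include hquad hTzT hc in
lemma rel_BL (n : ℤ) : (T:R) * ((v ^ n : Rˣ) : R)
    = ((u ^ n : Rˣ) : R) * (T:R) - (qv - 1) • (hPow u v n * (v:R)) := by
  induction n using Int.induction_on with
  | zero => simp [hPow_zero]
  | succ i ih =>
    have hv1 : ((v ^ ((i:ℤ)+1) : Rˣ) : R) = ((v ^ (i:ℤ) : Rˣ) : R) * (v:R) := by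
      rw [← Units.val_mul, ← zpow_add_one]
    rw [hv1, ← mul_assoc, ih, sub_mul, smul_mul_assoc, mul_assoc, rel_Tv T u v hquad hTzT,
      hPow_rec u v hc]
    rw [mul_sub, mul_smul_comm, ← mul_assoc, ← Units.val_mul, ← zpow_add_one, add_mul, smul_add]
    abel
  | pred i ih =>
    have hv1 : ((v ^ (-(i:ℤ)-1) : Rˣ) : R) = ((v ^ (-(i:ℤ)) : Rˣ) : R) * ((v⁻¹:Rˣ):R) := by
      rw [← Units.val_mul, ← zpow_sub_one]
    have f1 : hPow u v (-(i:ℤ)) * (v:R) * ((v⁻¹:Rˣ):R) = hPow u v (-(i:ℤ)) := by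
      rw [mul_assoc, unit_mul_inv, mul_one]
    have f2 : ((u ^ (-(i:ℤ)) : Rˣ) : R) * (((u⁻¹:Rˣ):R) * (T:R) + (qv-1) • ((u⁻¹:Rˣ):R))
        = ((u ^ (-(i:ℤ)-1) : Rˣ) : R) * (T:R) + (qv-1) • ((u ^ (-(i:ℤ)-1) : Rˣ) : R) := by
      rw [mul_add, mul_smul_comm, ← mul_assoc, ← Units.val_mul, ← zpow_sub_one,
        ← Units.val_mul]
    have hd : hPow u v (-(i:ℤ)-1) * (v:R) = hPow u v (-(i:ℤ)) - ((u ^ (-(i:ℤ)-1) : Rˣ) : R) := by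
      rw [hPow_down u v hc, mul_assoc, unit_inv_mul, mul_one]
    rw [hv1, ← mul_assoc, ih, sub_mul, smul_mul_assoc, f1,
      mul_assoc ((u ^ (-(i:ℤ)) : Rˣ) : R), rel_Tvinv T u v hquad hTzT, f2, hd, smul_sub]
    abel

include hquad hTzT hc in
lemma rel_A (n : ℤ) :
    ((u ^ n : Rˣ) : R) - ((T⁻¹:Rˣ):R) * ((v ^ n : Rˣ) : R)
      + (qv⁻¹ * (1 - qv)) • (hPow u v n * (u:R))
    = qv⁻¹ • (((u ^ n : Rˣ) : R) * (1 - (T:R))) := by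
  have g2 : hPow u v n * (u:R)
      = ((u ^ n : Rˣ) : R) - ((v ^ n : Rˣ) : R) + hPow u v n * (v:R) := by
    have hm := hPow_mul_sub u v hc n
    rw [mul_sub] at hm
    rw [sub_eq_iff_eq_add] at hm
    rw [hm]
  have g1 : ((T⁻¹:Rˣ):R) * ((v ^ n : Rˣ) : R)
      = qv⁻¹ • (((u ^ n : Rˣ) : R) * (T:R) - (qv-1) • (hPow u v n * (v:R))
          + (qv-1) • ((v ^ n : Rˣ) : R)) := by
    rw [tinv_eq T hquad, smul_mul_assoc, add_mul, smul_mul_assoc, one_mul,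
      rel_BL T u v hquad hTzT hc n]
  have hr : ((u ^ n : Rˣ) : R) * (1 - (T:R))
      = ((u ^ n : Rˣ) : R) - ((u ^ n : Rˣ) : R) * (T:R) := by
    rw [mul_sub, mul_one]
  rw [g2, g1, hr]
  have k1 : qv⁻¹ • (((u ^ n : Rˣ) : R) * (T:R) - (qv-1) • (hPow u v n * (v:R))
        + (qv-1) • ((v ^ n : Rˣ) : R))
      = qv⁻¹ • (((u ^ n : Rˣ) : R) * (T:R)) + (qv⁻¹ * (1-qv)) • (hPow u v n * (v:R))
        - (qv⁻¹ * (1-qv)) • ((v ^ n : Rˣ) : R) := by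
    rw [smul_add, smul_sub, smul_smul, smul_smul,
      show qv⁻¹*(qv-1) = -(qv⁻¹*(1-qv)) from by ring, neg_smul, neg_smul]
    abel
  have k2 : (qv⁻¹ * (1-qv)) • (((u ^ n : Rˣ) : R) - ((v ^ n : Rˣ) : R) + hPow u v n * (v:R))
      = (qv⁻¹ * (1-qv)) • ((u ^ n : Rˣ) : R) - (qv⁻¹ * (1-qv)) • ((v ^ n : Rˣ) : R)
        + (qv⁻¹ * (1-qv)) • (hPow u v n * (v:R)) := by
    rw [smul_add, smul_sub]
  have k3 : ((u ^ n : Rˣ) : R) + (qv⁻¹ * (1-qv)) • ((u ^ n : Rˣ) : R)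
      = qv⁻¹ • ((u ^ n : Rˣ) : R) := by
    calc ((u ^ n : Rˣ) : R) + (qv⁻¹ * (1-qv)) • ((u ^ n : Rˣ) : R)
        = ((1:Kq) + qv⁻¹ * (1-qv)) • ((u ^ n : Rˣ) : R) := by rw [add_smul, one_smul]
      _ = qv⁻¹ • ((u ^ n : Rˣ) : R) := by
          rw [show (1:Kq) + qv⁻¹ * (1-qv) = qv⁻¹ from by field_simp [qv_ne_zero]; ring]
  rw [k1, k2, smul_sub, ← k3]
  abel
end HeckeMain

section HeckeMain2
variable {R : Type*} [Ring R] [Algebra Kq R]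
variable (T u v : Rˣ)
variable (hquad : ((T : R) - 1) * ((T : R) + qv • 1) = 0)
variable (hTzT : ((T⁻¹ : Rˣ) : R) * (v : R) * ((T⁻¹ : Rˣ) : R) = qv⁻¹ • (u : R))
variable (hc : Commute u v)

include hquad hTzT hc in
lemma rel_main (m k : ℤ) :
    ((u ^ m : Rˣ) : R) * ((v ^ k : Rˣ) : R)
      + (qv⁻¹ * (1 - qv)) • ((((u*v) ^ k : Rˣ) : R) * hPow u v (m-k) * (u:R))
      - ((T⁻¹:Rˣ):R) * ((u ^ k : Rˣ) : R) * ((v ^ m : Rˣ) : R)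
    = qv⁻¹ • ((((u*v) ^ k : Rˣ) : R) * ((u ^ (m-k) : Rˣ) : R) * (1 - (T:R))) := by
  have h1 : ((u ^ m : Rˣ) : R) * ((v ^ k : Rˣ) : R)
      = (((u*v) ^ k : Rˣ) : R) * ((u ^ (m-k) : Rˣ) : R) := by
    rw [← Units.val_mul, ← Units.val_mul]
    congr 1
    rw [hc.mul_zpow, mul_assoc, ← ((hc.zpow_left (m-k)).zpow_right k).eq, ← mul_assoc,
      ← zpow_add, zcongr u (show k + (m-k) = m from by ring)]
  have h2 : ((T⁻¹:Rˣ):R) * ((u ^ k : Rˣ) : R) * ((v ^ m : Rˣ) : R)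
      = (((u*v) ^ k : Rˣ) : R) * (((T⁻¹:Rˣ):R) * ((v ^ (m-k) : Rˣ) : R)) := by
    have hTc : ((T⁻¹:Rˣ):R) * (((u*v) ^ k : Rˣ) : R)
        = (((u*v) ^ k : Rˣ) : R) * ((T⁻¹:Rˣ):R) :=
      cval (((rel_Tcomm T u v hquad hTzT hc).zpow_right k).inv_left)
    have huk : ((u ^ k : Rˣ) : R) * ((v ^ m : Rˣ) : R)
        = (((u*v) ^ k : Rˣ) : R) * ((v ^ (m-k) : Rˣ) : R) := by
      rw [← Units.val_mul, ← Units.val_mul]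
      congr 1
      rw [hc.mul_zpow, mul_assoc, ← zpow_add, zcongr v (show k + (m-k) = m from by ring)]
    rw [mul_assoc, huk, ← mul_assoc, hTc, mul_assoc]
  rw [h1, h2]
  have hfac : (((u*v) ^ k : Rˣ) : R) * ((u ^ (m-k) : Rˣ) : R)
      + (qv⁻¹ * (1 - qv)) • ((((u*v) ^ k : Rˣ) : R) * hPow u v (m-k) * (u:R))
      - (((u*v) ^ k : Rˣ) : R) * (((T⁻¹:Rˣ):R) * ((v ^ (m-k) : Rˣ) : R))
      = (((u*v) ^ k : Rˣ) : R) * (((u ^ (m-k) : Rˣ) : R)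
          - ((T⁻¹:Rˣ):R) * ((v ^ (m-k) : Rˣ) : R)
          + (qv⁻¹ * (1 - qv)) • (hPow u v (m-k) * (u:R))) := by
    simp only [mul_add, mul_sub, mul_smul_comm, mul_assoc]
    abel
  rw [hfac, rel_A T u v hquad hTzT hc (m-k), mul_smul_comm, mul_assoc]
end HeckeMain2


open BqtDatum in
/-- z₁^m d₊ d₋ z₁^k d₊ = (q−1)·z₁^m φ z₁^k d₊ + d₋ T₁⁻¹ z₁^k d₊ z₁^m d₊
− q⁻¹(1−q)·d₋ (z₁z₂)^k h_{m−k−1}(z₁,z₂) z₁ d₊ d₊ as operators V₀ → V₁. -/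
theorem stmt17 (V : ℕ → Type*) [∀ k, AddCommGroup (V k)] [∀ k, Module Kq (V k)]
    (D : BqtDatum V) (m k : ℤ) :
    ((D.z 1 1 ^ m : (Module.End Kq (V 1))ˣ) : Module.End Kq (V 1)) ∘ₗ
        D.dp 0 ∘ₗ D.dm 0 ∘ₗ
        ((D.z 1 1 ^ k : (Module.End Kq (V 1))ˣ) : Module.End Kq (V 1)) ∘ₗ D.dp 0 =
    (qv - 1) •
      ((((D.z 1 1 ^ m : (Module.End Kq (V 1))ˣ) : Module.End Kq (V 1)) *
          phiE D.dp D.dm 0 *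
          ((D.z 1 1 ^ k : (Module.End Kq (V 1))ˣ) : Module.End Kq (V 1))) ∘ₗ D.dp 0) +
    (D.dm 1 ∘ₗ
        ((((D.T 2 1)⁻¹ : (Module.End Kq (V 2))ˣ) : Module.End Kq (V 2)) *
          ((D.z 2 1 ^ k : (Module.End Kq (V 2))ˣ) : Module.End Kq (V 2))) ∘ₗ
        D.dp 1 ∘ₗ
        ((D.z 1 1 ^ m : (Module.End Kq (V 1))ˣ) : Module.End Kq (V 1)) ∘ₗ D.dp 0) -
    (qv⁻¹ * (1 - qv)) •
      (D.dm 1 ∘ₗ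
        ((((D.z 2 1 * D.z 2 2) ^ k : (Module.End Kq (V 2))ˣ) : Module.End Kq (V 2)) *
          hOp D (m - k) * (D.z 2 1 : Module.End Kq (V 2))) ∘ₗ
        D.dp 1 ∘ₗ D.dp 0) := by

  have hquad := D.hecke 2 1 le_rfl (by norm_num)
  have hTzT := D.TzT 2 1 le_rfl (by norm_num)
  have hcz : Commute (D.z 2 1) (D.z 2 2) := D.z_comm 2 1 2 le_rfl one_le_two one_le_two le_rfl
  have hphi2 : (qv - 1) • (phiE D.dp D.dm 0) = D.dp 0 ∘ₗ D.dm 0 - D.dm 1 ∘ₗ D.dp 1 := by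
    rw [phiE, smul_smul, mul_inv_cancel₀ qv_sub_one_ne_zero, one_smul]
  have F1 : ∀ (n : ℤ) (f : V 0 →ₗ[Kq] V 2),
      ((D.z 1 1 ^ n : (Module.End Kq (V 1))ˣ) : Module.End Kq (V 1)) ∘ₗ (D.dm 1 ∘ₗ f)
        = D.dm 1 ∘ₗ (((D.z 2 1 ^ n : (Module.End Kq (V 2))ˣ) : Module.End Kq (V 2)) ∘ₗ f) := by
    intro n f
    rw [← LinearMap.comp_assoc,
      myConjZpow (D.dm 1) (D.z 2 1) (D.z 1 1) (D.zdm 1 1 le_rfl le_rfl) n,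
      LinearMap.comp_assoc]
  have F2 : ∀ (n : ℤ) (g : V 0 →ₗ[Kq] V 1),
      D.dp 1 ∘ₗ (((D.z 1 1 ^ n : (Module.End Kq (V 1))ˣ) : Module.End Kq (V 1)) ∘ₗ g)
        = ((D.z 2 2 ^ n : (Module.End Kq (V 2))ˣ) : Module.End Kq (V 2)) ∘ₗ (D.dp 1 ∘ₗ g) := by
    intro n g
    rw [← LinearMap.comp_assoc,
      ← myConjZpow (D.dp 1) (D.z 1 1) (D.z 2 2) (D.dpz 1 1 le_rfl le_rfl).symm n,
      LinearMap.comp_assoc]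
  have hG : ((D.T 2 1 : Module.End Kq (V 2))) ∘ₗ (D.dp 1 ∘ₗ D.dp 0) = D.dp 1 ∘ₗ D.dp 0 :=
    D.Tdpdp 0
  have hzero : ∀ (E : Module.End Kq (V 2)),
      (E ∘ₗ ((1 : Module.End Kq (V 2)) - (D.T 2 1 : Module.End Kq (V 2)))) ∘ₗ
        (D.dp 1 ∘ₗ D.dp 0) = 0 := by
    intro E
    rw [LinearMap.comp_assoc, LinearMap.sub_comp, Module.End.one_eq_id, LinearMap.id_comp, hG,
      sub_self, LinearMap.comp_zero]
  have main2 : D.dm 1 ∘ₗ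
      ((((D.z 2 1 ^ m : (Module.End Kq (V 2))ˣ) : (Module.End Kq (V 2))) * ((D.z 2 2 ^ k : (Module.End Kq (V 2))ˣ) : (Module.End Kq (V 2)))
        + (qv⁻¹ * (1 - qv)) • ((((D.z 2 1 * D.z 2 2) ^ k : (Module.End Kq (V 2))ˣ) : (Module.End Kq (V 2))) * hOp D (m-k) *
            (D.z 2 1 : (Module.End Kq (V 2))))
        - (((D.T 2 1)⁻¹ : (Module.End Kq (V 2))ˣ) : (Module.End Kq (V 2))) * ((D.z 2 1 ^ k : (Module.End Kq (V 2))ˣ) : (Module.End Kq (V 2))) *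
            ((D.z 2 2 ^ m : (Module.End Kq (V 2))ˣ) : (Module.End Kq (V 2)))) ∘ₗ (D.dp 1 ∘ₗ D.dp 0)) = 0 := by
    have hOpEq : hOp D (m - k) = hPow (D.z 2 1) (D.z 2 2) (m - k) := rfl
    rw [hOpEq, rel_main (D.T 2 1) (D.z 2 1) (D.z 2 2) hquad hTzT hcz m k,
      LinearMap.smul_comp, LinearMap.comp_smul, Module.End.mul_eq_comp,
      hzero ((((D.z 2 1 * D.z 2 2) ^ k : (Module.End Kq (V 2))ˣ) : (Module.End Kq (V 2))) * ((D.z 2 1 ^ (m-k) : (Module.End Kq (V 2))ˣ) : (Module.End Kq (V 2)))),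
      LinearMap.comp_zero, smul_zero]
  have HA' : (qv - 1) •
        ((((D.z 1 1 ^ m : (Module.End Kq (V 1))ˣ) : (Module.End Kq (V 1))) * phiE D.dp D.dm 0 * ((D.z 1 1 ^ k : (Module.End Kq (V 1))ˣ) : (Module.End Kq (V 1)))) ∘ₗ
          D.dp 0)
      = (((D.z 1 1 ^ m : (Module.End Kq (V 1))ˣ) : (Module.End Kq (V 1))) ∘ₗ D.dp 0 ∘ₗ D.dm 0 ∘ₗ
          ((D.z 1 1 ^ k : (Module.End Kq (V 1))ˣ) : (Module.End Kq (V 1))) ∘ₗ D.dp 0)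
        - D.dm 1 ∘ₗ ((((D.z 2 1 ^ m : (Module.End Kq (V 2))ˣ) : (Module.End Kq (V 2))) * ((D.z 2 2 ^ k : (Module.End Kq (V 2))ˣ) : (Module.End Kq (V 2)))) ∘ₗ
            (D.dp 1 ∘ₗ D.dp 0)) := by
    have e : ((D.z 1 1 ^ m : (Module.End Kq (V 1))ˣ) : (Module.End Kq (V 1))) * ((qv - 1) • phiE D.dp D.dm 0) *
          ((D.z 1 1 ^ k : (Module.End Kq (V 1))ˣ) : (Module.End Kq (V 1)))
        = (qv - 1) • (((D.z 1 1 ^ m : (Module.End Kq (V 1))ˣ) : (Module.End Kq (V 1))) * phiE D.dp D.dm 0 *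
            ((D.z 1 1 ^ k : (Module.End Kq (V 1))ˣ) : (Module.End Kq (V 1)))) := by
      rw [mul_smul_comm, smul_mul_assoc]
    rw [← LinearMap.smul_comp, ← e, hphi2]
    simp only [Module.End.mul_eq_comp, LinearMap.sub_comp, LinearMap.comp_sub,
      LinearMap.comp_assoc]
    rw [F1 m (D.dp 1 ∘ₗ (((D.z 1 1 ^ k : (Module.End Kq (V 1))ˣ) : (Module.End Kq (V 1))) ∘ₗ D.dp 0)), F2 k (D.dp 0)]
  have HB : D.dm 1 ∘ₗ
        (((((D.T 2 1)⁻¹ : (Module.End Kq (V 2))ˣ) : (Module.End Kq (V 2))) * ((D.z 2 1 ^ k : (Module.End Kq (V 2))ˣ) : (Module.End Kq (V 2)))) ∘ₗ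
          D.dp 1 ∘ₗ (((D.z 1 1 ^ m : (Module.End Kq (V 1))ˣ) : (Module.End Kq (V 1))) ∘ₗ D.dp 0))
      = D.dm 1 ∘ₗ (((((D.T 2 1)⁻¹ : (Module.End Kq (V 2))ˣ) : (Module.End Kq (V 2))) * ((D.z 2 1 ^ k : (Module.End Kq (V 2))ˣ) : (Module.End Kq (V 2))) *
          ((D.z 2 2 ^ m : (Module.End Kq (V 2))ˣ) : (Module.End Kq (V 2)))) ∘ₗ (D.dp 1 ∘ₗ D.dp 0)) := by
    simp only [Module.End.mul_eq_comp, LinearMap.comp_assoc]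
    rw [F2 m (D.dp 0)]
  have HP : D.dm 1 ∘ₗ ((((D.z 2 1 ^ m : (Module.End Kq (V 2))ˣ) : (Module.End Kq (V 2))) * ((D.z 2 2 ^ k : (Module.End Kq (V 2))ˣ) : (Module.End Kq (V 2)))) ∘ₗ
        (D.dp 1 ∘ₗ D.dp 0))
      = D.dm 1 ∘ₗ (((((D.T 2 1)⁻¹ : (Module.End Kq (V 2))ˣ) : (Module.End Kq (V 2))) * ((D.z 2 1 ^ k : (Module.End Kq (V 2))ˣ) : (Module.End Kq (V 2))) *
          ((D.z 2 2 ^ m : (Module.End Kq (V 2))ˣ) : (Module.End Kq (V 2)))) ∘ₗ (D.dp 1 ∘ₗ D.dp 0))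
        - (qv⁻¹ * (1 - qv)) • (D.dm 1 ∘ₗ
            (((((D.z 2 1 * D.z 2 2) ^ k : (Module.End Kq (V 2))ˣ) : (Module.End Kq (V 2))) * hOp D (m-k) *
              (D.z 2 1 : (Module.End Kq (V 2)))) ∘ₗ (D.dp 1 ∘ₗ D.dp 0))) := by
    simp only [LinearMap.add_comp, LinearMap.sub_comp, LinearMap.smul_comp,
      LinearMap.comp_add, LinearMap.comp_sub, LinearMap.comp_smul] at main2
    exact eq_sub_of_add_eq (sub_eq_zero.mp main2)
  rw [HA', HB, HP]
  abel

end
end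

section
/- In any B_{q,t}-module datum, for every n ≥ 2, all m₁, …, m_n ∈ ℤ and every 1 ≤ i ≤ n−1, the following identity of operators on V₀ holds: Y_{m₁,…,m_{i−1},m_i,m_{i+1},…,m_n} − qt·Y_{m₁,…,m_{i−1},m_i−1,m_{i+1}+1,…,m_n} = −Y_{m₁,…,m_i} ∘ Y_{m_{i+1},…,m_n}, where on the left only the i-th and (i+1)-st indices are altered, and on the right Y_{m_{i+1},…,m_n} is applied first. -/
/- Common setup: the field K = ℚ(q,t) and the notion of a B_{q,t}-module datum,
i.e. a family of K-vector spaces V_k (k ≥ 0) together with maps d₊ : V_k → V_{k+1},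
d₋ : V_k → V_{k−1}, invertible operators z_i (1 ≤ i ≤ k) and operators T_i
(1 ≤ i ≤ k−1) on V_k (the T_i are invertible as a consequence of the quadratic
Hecke relation, so we record them as units), subject to the defining relations
of the double Dyck path algebra 𝔹_{q,t}.  Operators compose right-to-left;
`Module.End` multiplication is composition. -/

noncomputable section

namespace BqtDatum

variable {V : ℕ → Type*} [∀ k, AddCommGroup (V k)] [∀ k, Module Kq (V k)]

lemma qv_ne_one : qv ≠ (1 : Kq) := by
  intro h
  have h1 : (MvPolynomial.X 0 : MvPolynomial (Fin 2) ℚ) = 1 := by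
    apply IsFractionRing.injective (MvPolynomial (Fin 2) ℚ) Kq
    simpa [qv] using h
  have := congrArg (MvPolynomial.coeff 0) h1
  simp [MvPolynomial.coeff_zero_X, MvPolynomial.coeff_one] at this

lemma key (D : BqtDatum V) :
    (D.z 1 1 : Module.End Kq (V 1)) * phiE D.dp D.dm 0
      - (qv * tv) • (phiE D.dp D.dm 0 * (D.z 1 1 : Module.End Kq (V 1)))
    = -((D.z 1 1 : Module.End Kq (V 1)) * (D.dp 0 ∘ₗ D.dm 0)) := by
  have hu : qv - 1 ≠ 0 := sub_ne_zero.mpr qv_ne_one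
  set ψ : Module.End Kq (V 1) := D.dp 0 ∘ₗ D.dm 0 with hψ
  set χ : Module.End Kq (V 1) := D.dm 1 ∘ₗ D.dp 1 with hχ
  have hz' : (D.z 1 1 : Module.End Kq (V 1)) * (qv • ψ - χ)
      = (qv * tv) • ((ψ - χ) * (D.z 1 1 : Module.End Kq (V 1))) := by
    have hz := D.zmain 0
    simpa [Module.End.mul_eq_comp, hψ, hχ] using hz
  have hφ : (qv - 1) • phiE D.dp D.dm 0 = ψ - χ := by
    rw [phiE, smul_smul, mul_inv_cancel₀ hu, one_smul]
  apply smul_right_injective (Module.End Kq (V 1)) hu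
  calc (qv - 1) • ((D.z 1 1 : Module.End Kq (V 1)) * phiE D.dp D.dm 0
        - (qv * tv) • (phiE D.dp D.dm 0 * (D.z 1 1 : Module.End Kq (V 1))))
      = (D.z 1 1 : Module.End Kq (V 1)) * (ψ - χ)
          - (qv * tv) • ((ψ - χ) * (D.z 1 1 : Module.End Kq (V 1))) := by
        rw [smul_sub, ← mul_smul_comm, hφ, smul_comm, ← smul_mul_assoc, hφ]
    _ = (D.z 1 1 : Module.End Kq (V 1)) * (ψ - χ)
          - (D.z 1 1 : Module.End Kq (V 1)) * (qv • ψ - χ) := by rw [hz']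
    _ = (D.z 1 1 : Module.End Kq (V 1)) * ((1 - qv) • ψ) := by
        rw [← mul_sub]
        congr 1
        rw [sub_smul, one_smul]
        abel
    _ = (qv - 1) • (-((D.z 1 1 : Module.End Kq (V 1)) * ψ)) := by
        rw [mul_smul_comm, smul_neg, ← neg_smul, neg_sub]

lemma core (D : BqtDatum V) (a : ℤ) :
    ((D.z 1 1 ^ a : (Module.End Kq (V 1))ˣ) : Module.End Kq (V 1)) * phiE D.dp D.dm 0
      - (qv * tv) • (((D.z 1 1 ^ (a - 1) : (Module.End Kq (V 1))ˣ) : Module.End Kq (V 1))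
          * phiE D.dp D.dm 0 * (D.z 1 1 : Module.End Kq (V 1)))
    = -(((D.z 1 1 ^ a : (Module.End Kq (V 1))ˣ) : Module.End Kq (V 1))
        * (D.dp 0 ∘ₗ D.dm 0)) := by
  have h := congrArg
    (fun X => ((D.z 1 1 ^ (a - 1) : (Module.End Kq (V 1))ˣ) : Module.End Kq (V 1)) * X)
    (key D)
  simp only [mul_sub, mul_smul_comm, mul_neg, ← mul_assoc] at h
  have hz : ((D.z 1 1 ^ (a - 1) : (Module.End Kq (V 1))ˣ) : Module.End Kq (V 1))
      * (D.z 1 1 : Module.End Kq (V 1))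
      = ((D.z 1 1 ^ a : (Module.End Kq (V 1))ˣ) : Module.End Kq (V 1)) := by
    rw [← Units.val_mul]
    congr 1
    rw [← zpow_add_one, sub_add_cancel]
  rw [hz] at h
  exact h

/-- The prefix operator z₁^{m₁} φ ⋯ z₁^{m_j} φ on V₁. -/
def Wop (D : BqtDatum V) : List ℤ → Module.End Kq (V 1)
  | [] => 1
  | m :: ms => ((D.z 1 1 ^ m : (Module.End Kq (V 1))ˣ) : Module.End Kq (V 1)) *
      phiE D.dp D.dm 0 * Wop D ms

lemma Pp_cons' (D : BqtDatum V) (m : ℤ) (l : List ℤ) (hl : l ≠ []) :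
    Pp D (m :: l) = ((D.z 1 1 ^ m : (Module.End Kq (V 1))ˣ) : Module.End Kq (V 1)) *
      phiE D.dp D.dm 0 * Pp D l := by
  cases l with
  | nil => exact absurd rfl hl
  | cons x xs => rfl

lemma Pp_split (D : BqtDatum V) (pre : List ℤ) (x : ℤ) (xs : List ℤ) :
    Pp D (pre ++ x :: xs) = Wop D pre * Pp D (x :: xs) := by
  induction pre with
  | nil => simp [Wop]
  | cons m pre ih =>
      rw [List.cons_append, Pp_cons' D m _ (by simp), ih, Wop]
      simp only [mul_assoc]

lemma zpow_succ (D : BqtDatum V) (b : ℤ) :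
    ((D.z 1 1 ^ (b + 1) : (Module.End Kq (V 1))ˣ) : Module.End Kq (V 1))
      = (D.z 1 1 : Module.End Kq (V 1)) *
        ((D.z 1 1 ^ b : (Module.End Kq (V 1))ˣ) : Module.End Kq (V 1)) := by
  rw [← Units.val_mul]
  congr 1
  rw [add_comm, zpow_add, zpow_one]

lemma Pp_shift (D : BqtDatum V) (b : ℤ) (l : List ℤ) :
    Pp D ((b + 1) :: l) = (D.z 1 1 : Module.End Kq (V 1)) * Pp D (b :: l) := by
  cases l with
  | nil =>
      show ((D.z 1 1 ^ (b + 1) : (Module.End Kq (V 1))ˣ) : Module.End Kq (V 1))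
        = (D.z 1 1 : Module.End Kq (V 1)) *
          ((D.z 1 1 ^ b : (Module.End Kq (V 1))ˣ) : Module.End Kq (V 1))
      exact zpow_succ D b
  | cons x xs =>
      rw [Pp_cons' D (b + 1) _ (by simp), Pp_cons' D b _ (by simp), zpow_succ]
      simp only [mul_assoc]

lemma keyV1 (D : BqtDatum V) (a b : ℤ) (post : List ℤ) :
    Pp D (a :: b :: post) - (qv * tv) • Pp D ((a - 1) :: (b + 1) :: post)
    = -(((D.z 1 1 ^ a : (Module.End Kq (V 1))ˣ) : Module.End Kq (V 1))
        * (D.dp 0 ∘ₗ D.dm 0) * Pp D (b :: post)) := by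
  rw [Pp_cons' D a _ (by simp), Pp_cons' D (a - 1) _ (by simp), Pp_shift]
  have h := congrArg (fun X => X * Pp D (b :: post)) (core D a)
  simpa only [sub_mul, smul_mul_assoc, neg_mul, mul_assoc] using h

lemma Pp_single (D : BqtDatum V) (a : ℤ) :
    Pp D [a] = ((D.z 1 1 ^ a : (Module.End Kq (V 1))ˣ) : Module.End Kq (V 1)) := rfl

end BqtDatum

open BqtDatum in
/-- Y_{m₁,…,m_i,m_{i+1},…,m_n} − qt·Y_{m₁,…,m_i−1,m_{i+1}+1,…,m_n}
= −Y_{m₁,…,m_i} ∘ Y_{m_{i+1},…,m_n} as operators on V₀; here `pre` is the list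
m₁,…,m_{i−1}, `a` = m_i, `b` = m_{i+1} and `post` is the list m_{i+2},…,m_n
(so n ≥ 2 and 1 ≤ i ≤ n−1 are automatic). -/
theorem stmt18 (V : ℕ → Type*) [∀ k, AddCommGroup (V k)] [∀ k, Module Kq (V k)]
    (D : BqtDatum V) (pre post : List ℤ) (a b : ℤ) :
    Yop D (pre ++ a :: b :: post) - (qv * tv) • Yop D (pre ++ (a - 1) :: (b + 1) :: post) =
      -(Yop D (pre ++ [a]) * Yop D (b :: post)) := by
  have h := keyV1 D a b post
  have h2 := congrArg (fun X => Wop D pre * X) h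
  simp only [mul_sub, mul_smul_comm, mul_neg] at h2
  ext x
  have h3 := congrArg (fun F => D.dm 0 (F (D.dp 0 x))) h2
  simp only [Yop, Aop, Pp_split, Pp_single, LinearMap.sub_apply, LinearMap.smul_apply,
    map_sub, map_smul, Module.End.mul_apply, LinearMap.neg_apply, map_neg,
    LinearMap.comp_apply] at h3 ⊢
  exact h3

end
end
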